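/- For every permutation π, g(f(π)) = π, where f maps π to the word of run indices of its letters and g maps a word to the concatenation of the increasing position-lists of its letters 1, 2, ..., max. -/

import Mathlib

/-
`f(π)` sends each letter `c` to the index of the ascending run of `π` containing it, so `g(f(π))`
lists the letters of the first run in increasing order, then those of the second run, and so on.
Letters of an earlier run stand earlier in `π`, and within a run `π` increases, so this is `π`
itself: both lists consist of the letters `1, …, n`, and both are sorted by position in `π`.
-/

/-- Two lists of naturals are order-isomorphic: same length and same relative order. -/
def OrdIso (a b : List ℕ) : Prop :=
  a.length = b.length ∧
    ∀ i, i < a.length → ∀ j, j < a.length →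
      (a.getD i 0 < a.getD j 0 ↔ b.getD i 0 < b.getD j 0)

instance (a b : List ℕ) : Decidable (OrdIso a b) := by unfold OrdIso; infer_instance

/-- `σ` occurs as a pattern in `π`: some subsequence of `π` is order-isomorphic to `σ`. -/
def occursIn (σ π : List ℕ) : Prop := ∃ s ∈ π.sublists, OrdIso σ s

instance (σ π : List ℕ) : Decidable (occursIn σ π) := by unfold occursIn; infer_instance

/-- `l` is a permutation of `1, …, l.length`. -/
def IsPermList (l : List ℕ) : Prop := l.Perm ((List.range l.length).map (· + 1))

/-- The number of descents of `l` (positions `i` with `l i > l (i+1)`, 0-based). -/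
def des (l : List ℕ) : ℕ :=
  ((List.range (l.length - 1)).filter (fun i => decide (l.getD (i+1) 0 < l.getD i 0))).length

/-- `d_π(c)`: one plus the number of descents of `π` preceding the letter `c`. -/
def dval (l : List ℕ) (c : ℕ) : ℕ :=
  1 + ((List.range (l.idxOf c)).filter (fun i => decide (l.getD (i+1) 0 < l.getD i 0))).length

/-- The word `f(π) = d_π(1) d_π(2) ⋯ d_π(n)`. -/
def fword (l : List ℕ) : List ℕ := (List.range l.length).map (fun i => dval l (i+1))

/-- The largest letter of the word `w`. -/
def maxLetter (w : List ℕ) : ℕ := w.foldr max 0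

/-- `p_w(j)`: positions (1-based, increasing) of the letter `j` in `w`. -/
def posList (w : List ℕ) (j : ℕ) : List ℕ :=
  ((List.range w.length).filter (fun i => decide (w.getD i 0 = j))).map (· + 1)

/-- `g(w)`: the concatenation of the position lists `p_w(1), …, p_w(max w)`. -/
def gperm (w : List ℕ) : List ℕ := (List.range (maxLetter w)).flatMap (fun j => posList w (j+1))

/-- Membership in the poset 𝒜̂: positive letters, every letter in `{1,…,max w}` occurs,
and the rightmost occurrence of each `i < max w` is preceded by an occurrence of `i+1`. -/
def InAhat (w : List ℕ) : Prop :=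
  (∀ x ∈ w, 1 ≤ x) ∧
  (∀ i, i < maxLetter w → i + 1 ∈ w) ∧
  (∀ i, i < maxLetter w - 1 → ∃ t, t < w.length ∧ w.getD t 0 = i + 1 ∧
     (∀ s, s < w.length → t < s → w.getD s 0 ≠ i + 1) ∧ ∃ u, u < t ∧ w.getD u 0 = i + 2)

instance (w : List ℕ) : Decidable (InAhat w) := by unfold InAhat; infer_instance

/-- All permutations (as lists on `1..k`) of every length `k ≤ n`. -/
def permsUpTo (n : ℕ) : List (List ℕ) :=
  (List.range (n+1)).flatMap (fun k => ((List.range k).map (· + 1)).permutations)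

/-- The interval `[a,b]` in the pattern containment poset, as a list. -/
def intervalList (a b : List ℕ) : List (List ℕ) :=
  (permsUpTo b.length).filter (fun z => decide (occursIn a z ∧ occursIn z b))

/-- `μ` is the Möbius function of the poset of permutations under pattern containment:
`μ(a,a) = 1` and, for `a < b`, `∑_{a ≤ z ≤ b} μ(a,z) = 0`. -/
def MoebiusOn (μ : List ℕ → List ℕ → ℤ) : Prop :=
  (∀ a, μ a a = 1) ∧
  ∀ a b, IsPermList a → IsPermList b → occursIn a b → a ≠ b →
    ((intervalList a b).map (μ a)).sum = 0

/-- All lists of length `n` with entries in `{0, …, k-1}`. -/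
def listsOf (n k : ℕ) : List (List ℕ) :=
  (List.range n).foldr (fun _ acc => (List.range k).flatMap (fun a => acc.map (a :: ·))) [[]]

/-- The letters of `π` in the nonzero positions of `η`. -/
def embOcc (η π : List ℕ) : List ℕ :=
  ((List.range π.length).filter (fun i => decide (η.getD i 0 ≠ 0))).map (fun i => π.getD i 0)

/-- `η` is an embedding of `σ` in `π`: a sequence of length `|π|` whose nonzero positions
are the positions of an occurrence of `σ` in `π` and whose nonzero letters spell `σ`. -/
def IsEmbedding (η σ π : List ℕ) : Prop :=
  η.length = π.length ∧ η.filter (fun x => decide (x ≠ 0)) = σ ∧ OrdIso σ (embOcc η π)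

/-- `η` is a normal embedding: nonzero at every letter of `π` lying in the tail of an
adjacency (i.e. every position whose predecessor holds the previous value). -/
def IsNormalEmbedding (η σ π : List ℕ) : Prop :=
  IsEmbedding η σ π ∧
    ∀ i, i < π.length → 0 < i → π.getD i 0 = π.getD (i-1) 0 + 1 → η.getD i 0 ≠ 0

instance (η σ π : List ℕ) : Decidable (IsNormalEmbedding η σ π) := by
  unfold IsNormalEmbedding IsEmbedding; infer_instance

/-- The number of normal embeddings of `σ` in `π`. -/
def normalCount (σ π : List ℕ) : ℕ :=
  ((listsOf π.length (σ.length + 1)).filter (fun η => decide (IsNormalEmbedding η σ π))).length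

/-- The total number of letters in all tails of all adjacencies of `π`;
equivalently, the number of adjacency pairs of `π`. -/
def tailCount (π : List ℕ) : ℕ :=
  ((List.range π.length).filter (fun i => decide (0 < i ∧ π.getD i 0 = π.getD (i-1) 0 + 1))).length

/-- The number of occurrences of `σ` as a pattern in `π`. -/
def occCount (σ π : List ℕ) : ℕ :=
  ((List.range π.length).sublists.filter
    (fun s => decide (OrdIso σ (s.map (fun i => π.getD i 0))))).length

/-- All words of length `n` on the alphabet `{1, …, k}`. -/
def wordsOf (n k : ℕ) : List (List ℕ) := (listsOf n k).map (List.map (· + 1))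

/-- All permutations of `1, …, n`, as lists. -/
def permsOfLen (n : ℕ) : List (List ℕ) := ((List.range n).map (· + 1)).permutations

def descentsBefore (l : List ℕ) (m : ℕ) : ℕ :=
  ((List.range m).filter (fun i => decide (l.getD (i + 1) 0 < l.getD i 0))).length

lemma dval_eq_descentsBefore (l : List ℕ) (c : ℕ) :
    dval l c = 1 + descentsBefore l (l.idxOf c) := rfl

lemma descentsBefore_mono (l : List ℕ) : Monotone (descentsBefore l) := fun _ _ h =>
  ((List.range_sublist.mpr h).filter _).length_le

lemma descentsBefore_succ (l : List ℕ) (m : ℕ) :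
    descentsBefore l (m + 1) =
      descentsBefore l m + if l.getD (m + 1) 0 < l.getD m 0 then 1 else 0 := by
  unfold descentsBefore
  rw [List.range_succ, List.filter_append, List.length_append, List.filter_singleton]
  simp only [List.getD_eq_getElem?_getD]
  split_ifs with h <;> simp [h]

lemma getD_le_getD_of_descentsBefore_eq (l : List ℕ) {i j : ℕ} (hij : i ≤ j)
    (h : descentsBefore l i = descentsBefore l j) : l.getD i 0 ≤ l.getD j 0 := by
  induction j, hij using Nat.le_induction with
  | base => rfl
  | succ j hij ih =>
    have hstep := descentsBefore_succ l j
    have hmono := descentsBefore_mono l hij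
    have hno_descent : ¬ l.getD (j + 1) 0 < l.getD j 0 := fun hd => by
      rw [if_pos hd] at hstep; omega
    rw [if_neg hno_descent] at hstep
    exact (ih (by omega)).trans (not_lt.mp hno_descent)

lemma List.getD_idxOf {α : Type*} [BEq α] [LawfulBEq α] {l : List α} {a : α} (d : α)
    (ha : a ∈ l) : l.getD (l.idxOf a) d = a := by
  have hlt := List.idxOf_lt_length_iff.mpr ha
  rw [List.getD_eq_getElem _ _ hlt, List.getElem_idxOf hlt]

lemma idxOf_lt_idxOf_of_dval {l : List ℕ} {a b : ℕ} (ha : a ∈ l) (hb : b ∈ l)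
    (h : dval l a < dval l b ∨ dval l a = dval l b ∧ a < b) : l.idxOf a < l.idxOf b := by
  by_contra! hle
  have hmono := descentsBefore_mono l hle
  rw [dval_eq_descentsBefore, dval_eq_descentsBefore] at h
  obtain h | ⟨heq, hab⟩ := h
  · omega
  · have hba := getD_le_getD_of_descentsBefore_eq l hle (by omega)
    rw [List.getD_idxOf 0 ha, List.getD_idxOf 0 hb] at hba
    omega

lemma List.Nodup.pairwise_idxOf_lt {α : Type*} [BEq α] [LawfulBEq α] {l : List α}
    (h : l.Nodup) :
    l.Pairwise (fun a b => l.idxOf a < l.idxOf b) := by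
  rw [List.pairwise_iff_getElem]
  intro i j hi hj hij
  rwa [h.idxOf_getElem i hi, h.idxOf_getElem j hj]

lemma IsPermList.mem_iff {l : List ℕ} (h : IsPermList l) {c : ℕ} :
    c ∈ l ↔ 0 < c ∧ c ≤ l.length := by
  rw [List.Perm.mem_iff h, List.mem_map]
  simp only [List.mem_range]
  constructor
  · rintro ⟨i, hi, rfl⟩; omega
  · rintro ⟨h0, hc⟩; exact ⟨c - 1, by omega, by omega⟩

lemma IsPermList.nodup {l : List ℕ} (h : IsPermList l) : l.Nodup :=
  (List.Perm.nodup_iff h).mpr (List.nodup_range.map fun _ _ => Nat.succ.inj)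

lemma mem_posList_iff {w : List ℕ} {j c : ℕ} :
    c ∈ posList w j ↔ 0 < c ∧ c ≤ w.length ∧ w.getD (c - 1) 0 = j := by
  simp only [posList, List.mem_map, List.mem_filter, List.mem_range, decide_eq_true_eq]
  constructor
  · rintro ⟨i, ⟨hi, rfl⟩, rfl⟩
    exact ⟨by omega, by omega, rfl⟩
  · rintro ⟨h0, hc, rfl⟩
    exact ⟨c - 1, ⟨by omega, rfl⟩, by omega⟩

lemma posList_pairwise_lt (w : List ℕ) (j : ℕ) : (posList w j).Pairwise (· < ·) :=
  List.pairwise_map.mpr <| (List.pairwise_lt_range.sublist List.filter_sublist).imp fun h => by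
    omega

lemma mem_gperm {w : List ℕ} (hw : ∀ x ∈ w, 0 < x) {c : ℕ} :
    c ∈ gperm w ↔ 0 < c ∧ c ≤ w.length := by
  simp only [gperm, List.mem_flatMap, List.mem_range, mem_posList_iff]
  constructor
  · rintro ⟨_, _, h0, hc, _⟩
    exact ⟨h0, hc⟩
  · rintro ⟨h0, hc⟩
    have hmem : w.getD (c - 1) 0 ∈ w := by
      rw [List.getD_eq_getElem _ _ (by omega)]
      exact List.getElem_mem _
    have hpos := hw _ hmem
    have hmax : w.getD (c - 1) 0 ≤ maxLetter w := List.le_max_of_le' 0 hmem le_rfl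
    exact ⟨w.getD (c - 1) 0 - 1, by omega, h0, hc, by omega⟩

/-- `g(w)` lists the positions of `w` in lexicographic order of (letter, position). -/
lemma pairwise_gperm {w : List ℕ} {R : ℕ → ℕ → Prop}
    (hR : ∀ a b, 0 < a → a ≤ w.length → 0 < b → b ≤ w.length →
      w.getD (a - 1) 0 < w.getD (b - 1) 0 ∨ w.getD (a - 1) 0 = w.getD (b - 1) 0 ∧ a < b →
        R a b) :
    (gperm w).Pairwise R := by
  refine List.pairwise_flatMap.mpr ⟨fun j _ => ?_, ?_⟩
  · refine (posList_pairwise_lt w (j + 1)).imp_of_mem fun ha hb hab => ?_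
    obtain ⟨ha0, ha, hwa⟩ := mem_posList_iff.mp ha
    obtain ⟨hb0, hb, hwb⟩ := mem_posList_iff.mp hb
    exact hR _ _ ha0 ha hb0 hb (Or.inr ⟨hwa.trans hwb.symm, hab⟩)
  · refine List.pairwise_lt_range.imp fun hjk a ha b hb => ?_
    obtain ⟨ha0, ha, hwa⟩ := mem_posList_iff.mp ha
    obtain ⟨hb0, hb, hwb⟩ := mem_posList_iff.mp hb
    exact hR _ _ ha0 ha hb0 hb (Or.inl (by omega))

lemma length_fword (l : List ℕ) : (fword l).length = l.length := by
  simp [fword]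

lemma getD_fword {l : List ℕ} {c : ℕ} (h0 : 0 < c) (hc : c ≤ l.length) :
    (fword l).getD (c - 1) 0 = dval l c := by
  rw [List.getD_eq_getElem _ _ (by rw [length_fword]; omega)]
  simp only [fword, List.getElem_map, List.getElem_range]
  congr 1
  omega

lemma pos_of_mem_fword {l : List ℕ} {x : ℕ} (hx : x ∈ fword l) : 0 < x := by
  obtain ⟨_, _, rfl⟩ := List.mem_map.mp hx
  rw [dval_eq_descentsBefore]
  omega

/-- for every permutation `π`, `g(f(π)) = π`. -/
theorem gperm_fword (π : List ℕ) (hπ : IsPermList π) : gperm (fword π) = π := by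
  let R : ℕ → ℕ → Prop := fun a b => π.idxOf a < π.idxOf b
  have : Std.Irrefl R := ⟨fun _ => lt_irrefl _⟩
  have : Std.Antisymm R := ⟨fun _ _ hab hba => absurd (hab.trans hba) (lt_irrefl _)⟩
  have hmem : ∀ c, c ∈ gperm (fword π) ↔ c ∈ π := fun c => by
    rw [mem_gperm fun _ => pos_of_mem_fword, length_fword, hπ.mem_iff]
  refine List.Pairwise.eq_of_mem_iff (r := R) ?_ hπ.nodup.pairwise_idxOf_lt hmem
  refine pairwise_gperm fun a b ha0 ha hb0 hb hlex => ?_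
  rw [length_fword] at ha hb
  rw [getD_fword ha0 ha, getD_fword hb0 hb] at hlex
  exact idxOf_lt_idxOf_of_dval (hπ.mem_iff.mpr ⟨ha0, ha⟩) (hπ.mem_iff.mpr ⟨hb0, hb⟩) hlex
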